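/- If the orthogonality/distinctness predicate OD_A(S) holds for a set S of well-typed open values of type A, then for every closed value v of type A there exists a unique value v' ∈ S and a unique substitution σ such that σ matches v' against v (i.e., σ[v'] = v). In other words, OD_A(S) guarantees that the patterns in S are exhaustive and non-overlapping. -/
import Mathlib


namespace LinRev

/-! ## Types of the linear reversible language:  A ::= 1 | A⊕B | A⊗B | μX.A | X  -/

inductive Ty : Type
  | one : Ty
  | sum : Ty → Ty → Ty
  | prod : Ty → Ty → Ty
  | mu : Ty → Ty
  | tvar : ℕ → Ty
  deriving DecidableEq

/-- Substitute type `T` for the (de Bruijn) type variable `n` in a type. -/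
def Ty.substF : Ty → ℕ → Ty → Ty
  | .one, _, _ => .one
  | .sum A B, n, T => .sum (A.substF n T) (B.substF n T)
  | .prod A B, n, T => .prod (A.substF n T) (B.substF n T)
  | .mu A, n, T => .mu (A.substF (n + 1) T)
  | .tvar m, n, T => if m = n then T else .tvar m

/-- `A[X ← μX.A]`, the one-step unfolding of `μX.A` with body `A`. -/
def Ty.unfold (A : Ty) : Ty := A.substF 0 (.mu A)

/-! ## Values:  v ::= () | x | inl v | inr v | ⟨v,v⟩ | fold v  -/

inductive Val : Type
  | unit : Val
  | var : ℕ → Val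
  | inl : Val → Val
  | inr : Val → Val
  | pair : Val → Val → Val
  | fold : Val → Val
  deriving DecidableEq

/-- Free variables of a value. -/
def Val.fv : Val → Finset ℕ
  | .unit => ∅
  | .var x => {x}
  | .inl v => v.fv
  | .inr v => v.fv
  | .pair v w => v.fv ∪ w.fv
  | .fold v => v.fv

/-! ## Substitutions -/

/-- A substitution: a partial map from variables to values. -/
abbrev Sub := ℕ → Option Val

/-- The support of a substitution. -/
def Sub.supp (σ : Sub) : Set ℕ := {x | σ x ≠ none}

/-- Disjointness of supports. -/
def Sub.disj (σ₁ σ₂ : Sub) : Prop := ∀ x, σ₁ x = none ∨ σ₂ x = none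

/-- Union of two substitutions. -/
def Sub.union (σ₁ σ₂ : Sub) : Sub := fun x => (σ₁ x).orElse (fun _ => σ₂ x)

/-- Applying a substitution to a value. -/
def Val.applySub (σ : Sub) : Val → Val
  | .unit => .unit
  | .var x => (σ x).getD (.var x)
  | .inl v => .inl (v.applySub σ)
  | .inr v => .inr (v.applySub σ)
  | .pair v w => .pair (v.applySub σ) (w.applySub σ)
  | .fold v => .fold (v.applySub σ)

/-- The pattern-matching judgment `σ[p] = v`. -/
inductive Matches : Sub → Val → Val → Prop
  | unit : Matches (fun _ => none) .unit .unit
  | var (x : ℕ) (v : Val) :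
      Matches (fun y => if y = x then some v else none) (.var x) v
  | inl {σ p v} : Matches σ p v → Matches σ (.inl p) (.inl v)
  | inr {σ p v} : Matches σ p v → Matches σ (.inr p) (.inr v)
  | fold {σ p v} : Matches σ p v → Matches σ (.fold p) (.fold v)
  | pair {σ₁ σ₂ p₁ p₂ v₁ v₂} :
      Matches σ₁ p₁ v₁ → Matches σ₂ p₂ v₂ → Sub.disj σ₁ σ₂ →
      Matches (σ₁.union σ₂) (.pair p₁ p₂) (.pair v₁ v₂)

/-! ## The exhaustivity/non-overlapping predicate `OD_A(S)` -/

def proj1 (S : Set Val) : Set Val := {v | ∃ w, Val.pair v w ∈ S}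
def proj2 (S : Set Val) : Set Val := {w | ∃ v, Val.pair v w ∈ S}
def sect1 (S : Set Val) (v : Val) : Set Val := {w | Val.pair v w ∈ S}
def sect2 (S : Set Val) (w : Val) : Set Val := {v | Val.pair v w ∈ S}

inductive OD : Ty → Set Val → Prop
  | var (A : Ty) (x : ℕ) : OD A {Val.var x}
  | unit : OD .one {Val.unit}
  | sum {A B : Ty} {S T : Set Val} :
      OD A S → OD B T → OD (.sum A B) (Val.inl '' S ∪ Val.inr '' T)
  | mu {A : Ty} {S : Set Val} :
      OD A.unfold S → OD (.mu A) (Val.fold '' S)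
  | prodL {A B : Ty} {S : Set Val} :
      (∀ u ∈ S, ∃ v w, u = Val.pair v w) →
      OD A (proj1 S) → (∀ v ∈ proj1 S, OD B (sect1 S v)) →
      OD (.prod A B) S
  | prodR {A B : Ty} {S : Set Val} :
      (∀ u ∈ S, ∃ v w, u = Val.pair v w) →
      OD B (proj2 S) → (∀ w ∈ proj2 S, OD A (sect2 S w)) →
      OD (.prod A B) S

/-! ## Linear typing contexts (variables, at most one occurrence each) -/

abbrev Ctx := ℕ → Option Ty

def Ctx.empty : Ctx := fun _ => none
def Ctx.single (x : ℕ) (A : Ty) : Ctx := fun y => if y = x then some A else none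
def Ctx.disj (Γ Δ : Ctx) : Prop := ∀ x, Γ x = none ∨ Δ x = none
def Ctx.union (Γ Δ : Ctx) : Ctx := fun x => (Γ x).orElse (fun _ => Δ x)
def Ctx.unions (L : List Ctx) : Ctx := L.foldr Ctx.union Ctx.empty

/-- Linear typing of values: `Δ ⊢ v : A`. -/
inductive VTy : Ctx → Val → Ty → Prop
  | unit : VTy Ctx.empty .unit .one
  | var (x : ℕ) (A : Ty) : VTy (Ctx.single x A) (.var x) A
  | inl {Γ v A B} : VTy Γ v A → VTy Γ (.inl v) (.sum A B)
  | inr {Γ v A B} : VTy Γ v B → VTy Γ (.inr v) (.sum A B)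
  | fold {Γ v A} : VTy Γ v A.unfold → VTy Γ (.fold v) (.mu A)
  | pair {Γ Δ v w A B} :
      VTy Γ v A → VTy Δ w B → Ctx.disj Γ Δ →
      VTy (Γ.union Δ) (.pair v w) (.prod A B)

end LinRev
namespace LinRev

/-! ## Patterns, terms, isos -/

inductive Pat : Type
  | pvar : ℕ → Pat
  | ppair : Pat → Pat → Pat
  deriving DecidableEq

def Pat.toVal : Pat → Val
  | .pvar x => .var x
  | .ppair p q => .pair p.toVal q.toVal

def Pat.vars : Pat → Finset ℕ
  | .pvar x => {x}
  | .ppair p q => p.vars ∪ q.vars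

mutual
  inductive Term : Type
    | unit : Term
    | var : ℕ → Term
    | inl : Term → Term
    | inr : Term → Term
    | pair : Term → Term → Term
    | fold : Term → Term
    | app : Iso → Term → Term
    | lett : Pat → Term → Term → Term

  inductive Iso : Type
    | clauses : Clauses → Iso
    | fixI : ℕ → Iso → Iso
    | ivar : ℕ → Iso

  inductive Clauses : Type
    | nil : Clauses
    | cons : Val → Term → Clauses → Clauses
end

def Clauses.toList : Clauses → List (Val × Term)
  | .nil => []
  | .cons v e r => (v, e) :: r.toList

def Val.toTerm : Val → Term
  | .unit => .unit
  | .var x => .var x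
  | .inl v => .inl v.toTerm
  | .inr v => .inr v.toTerm
  | .pair v w => .pair v.toTerm w.toTerm
  | .fold v => .fold v.toTerm

def Pat.toTerm (p : Pat) : Term := p.toVal.toTerm

def Term.asVal : Term → Option Val
  | .unit => some .unit
  | .var x => some (.var x)
  | .inl t => t.asVal.map .inl
  | .inr t => t.asVal.map .inr
  | .pair a b =>
      match a.asVal, b.asVal with
      | some v, some w => some (.pair v w)
      | _, _ => none
  | .fold t => t.asVal.map .fold
  | _ => none

def Term.asPat : Term → Option Pat
  | .var x => some (.pvar x)
  | .pair a b =>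
      match a.asPat, b.asPat with
      | some p, some q => some (.ppair p q)
      | _, _ => none
  | _ => none

/-- `Val(e)`: the value at the end of a chain of lets. -/
def Term.valOf : Term → Option Val
  | .lett _ _ t₂ => t₂.valOf
  | t => t.asVal

/-- Free (term) variables of a term. -/
def Term.fvT : Term → Finset ℕ
  | .unit => ∅
  | .var x => {x}
  | .inl t => t.fvT
  | .inr t => t.fvT
  | .fold t => t.fvT
  | .pair a b => a.fvT ∪ b.fvT
  | .app _ t => t.fvT
  | .lett p a b => a.fvT ∪ (b.fvT \ p.vars)

/-- Applying a (value) substitution to a term. -/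
def Term.applySub (σ : Sub) : Term → Term
  | .unit => .unit
  | .var x => ((σ x).map Val.toTerm).getD (.var x)
  | .inl t => .inl (t.applySub σ)
  | .inr t => .inr (t.applySub σ)
  | .pair a b => .pair (a.applySub σ) (b.applySub σ)
  | .fold t => .fold (t.applySub σ)
  | .app ω t => .app ω (t.applySub σ)
  | .lett p a b => .lett p (a.applySub σ) (b.applySub σ)

/-! ## Substitution of iso-variables -/

mutual
  def Term.isoSub (f : ℕ) (w : Iso) : Term → Term
    | .unit => .unit
    | .var x => .var x
    | .inl t => .inl (Term.isoSub f w t)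
    | .inr t => .inr (Term.isoSub f w t)
    | .pair a b => .pair (Term.isoSub f w a) (Term.isoSub f w b)
    | .fold t => .fold (Term.isoSub f w t)
    | .app ω t => .app (Iso.isoSub f w ω) (Term.isoSub f w t)
    | .lett p a b => .lett p (Term.isoSub f w a) (Term.isoSub f w b)
  termination_by t => sizeOf t

  def Iso.isoSub (f : ℕ) (w : Iso) : Iso → Iso
    | .ivar g => if g = f then w else .ivar g
    | .fixI g ω => if g = f then .fixI g ω else .fixI g (Iso.isoSub f w ω)
    | .clauses l => .clauses (Clauses.isoSub f w l)
  termination_by ω => sizeOf ω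

  def Clauses.isoSub (f : ℕ) (w : Iso) : Clauses → Clauses
    | .nil => .nil
    | .cons v e r => .cons v (Term.isoSub f w e) (Clauses.isoSub f w r)
  termination_by l => sizeOf l
end

/-! ## Inversion of isos -/

mutual
  /-- The dual iso `ω⊥`. -/
  def Iso.inv : Iso → Iso
    | .ivar f => .ivar f
    | .fixI f ω => .fixI f ω.inv
    | .clauses l => .clauses l.inv
  termination_by ω => sizeOf ω

  def Clauses.inv : Clauses → Clauses
    | .nil => .nil
    | .cons v e r =>
        match invAux (Val.toTerm v) e with
        | some (v', e') => .cons v' e' r.inv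
        | none => .cons v e r.inv
  termination_by l => sizeOf l

  /-- Invert a clause body `let p₁ = ω₁ p₁' in … let pₙ = ωₙ pₙ' in v'`,
  reversing the lets and inverting each sub-iso; `acc` accumulates the result. -/
  def invAux : Term → Term → Option (Val × Term)
    | acc, .lett p (.app ω t) e =>
        match t.asPat with
        | some p' => invAux (.lett p' (.app ω.inv p.toTerm) acc) e
        | none => none
    | acc, t => t.asVal.map (fun v' => (v', acc))
  termination_by _ e => sizeOf e
end

end LinRev
namespace LinRev

/-! ## Operational semantics (deterministic call-by-value) -/

inductive Step : Term → Term → Prop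
  | inlC {t t'} : Step t t' → Step (.inl t) (.inl t')
  | inrC {t t'} : Step t t' → Step (.inr t) (.inr t')
  | foldC {t t'} : Step t t' → Step (.fold t) (.fold t')
  | pairL {t t'} (v : Val) : Step t t' → Step (.pair t v.toTerm) (.pair t' v.toTerm)
  | pairR {t t'} (v : Val) : Step t t' → Step (.pair v.toTerm t) (.pair v.toTerm t')
  | appC {ω t t'} : Step t t' → Step (.app ω t) (.app ω t')
  | lettC {p t₁ t₁' t₂} : Step t₁ t₁' → Step (.lett p t₁ t₂) (.lett p t₁' t₂)
  | isoRec {f ω t} :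
      Step (.app (.fixI f ω) t) (.app (Iso.isoSub f (.fixI f ω) ω) t)
  | lettE {σ : Sub} {p : Pat} {v : Val} {t : Term} :
      Matches σ p.toVal v → Step (.lett p v.toTerm t) (t.applySub σ)
  | isoApp {σ : Sub} {l : Clauses} {vi : Val} {e : Term} {v : Val} :
      (vi, e) ∈ l.toList → Matches σ vi v →
      Step (.app (.clauses l) v.toTerm) (e.applySub σ)

/-- Reflexive-transitive closure `→*`. -/
def Steps : Term → Term → Prop := Relation.ReflTransGen Step

/-! ## Structural recursion criterion -/

/-- Flatten a right-nested tensor type into its components. -/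
def Ty.tuple : Ty → List Ty
  | .prod A B => A :: B.tuple
  | A => [A]

/-- Flatten a right-nested pair value into its components. -/
def Val.tuple : Val → List Val
  | .pair a b => a :: b.tuple
  | v => [v]

/-- If a term is a tuple of variables `(x₁, …, xₘ)`, return the variables. -/
def Term.tupleVars : Term → Option (List ℕ)
  | .var x => some [x]
  | .pair (.var x) t => t.tupleVars.map (x :: ·)
  | _ => none

/-- Subterm relation on values. -/
inductive Val.SubV : Val → Val → Prop
  | refl (v : Val) : Val.SubV v v
  | inl {u v} : Val.SubV u v → Val.SubV u (.inl v)
  | inr {u v} : Val.SubV u v → Val.SubV u (.inr v)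
  | fold {u v} : Val.SubV u v → Val.SubV u (.fold v)
  | pairL {u v w} : Val.SubV u v → Val.SubV u (.pair v w)
  | pairR {u v w} : Val.SubV u w → Val.SubV u (.pair v w)

/- `RecCallT f p t` : the recursive call `f p` occurs as a subterm of `t`. -/
mutual
  inductive RecCallT : ℕ → Term → Term → Prop
    | here (f : ℕ) (p : Term) : RecCallT f p (.app (.ivar f) p)
    | inl {f p t} : RecCallT f p t → RecCallT f p (.inl t)
    | inr {f p t} : RecCallT f p t → RecCallT f p (.inr t)
    | fold {f p t} : RecCallT f p t → RecCallT f p (.fold t)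
    | pairL {f p t₁ t₂} : RecCallT f p t₁ → RecCallT f p (.pair t₁ t₂)
    | pairR {f p t₁ t₂} : RecCallT f p t₂ → RecCallT f p (.pair t₁ t₂)
    | appIso {f p ω t} : RecCallI f p ω → RecCallT f p (.app ω t)
    | appArg {f p ω t} : RecCallT f p t → RecCallT f p (.app ω t)
    | lett₁ {f p q t₁ t₂} : RecCallT f p t₁ → RecCallT f p (.lett q t₁ t₂)
    | lett₂ {f p q t₁ t₂} : RecCallT f p t₂ → RecCallT f p (.lett q t₁ t₂)

  inductive RecCallI : ℕ → Term → Iso → Prop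
    | clauses {f p l} : RecCallC f p l → RecCallI f p (.clauses l)
    | fixI {f g p ω} : RecCallI f p ω → g ≠ f → RecCallI f p (.fixI g ω)

  inductive RecCallC : ℕ → Term → Clauses → Prop
    | head {f p v e r} : RecCallT f p e → RecCallC f p (.cons v e r)
    | tail {f p v e r} : RecCallC f p r → RecCallC f p (.cons v e r)
end

/-- The structural recursion criterion for `fix f. {vᵢ ↔ eᵢ} : A ↔ C`:
some component `Aⱼ = μX.B` of the input type is such that in every clause,
if the `j`-th component of the pattern is closed there is no recursive call,
and otherwise every recursive call `f p` has `p` a tuple of variables whose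
`j`-th component is a strict subterm of the `j`-th pattern component. -/
def StructRecClauses (f : ℕ) (l : Clauses) (A : Ty) : Prop :=
  ∃ (j : ℕ) (B : Ty), A.tuple[j]? = some (Ty.mu B) ∧
    ∀ c ∈ l.toList, ∃ vj, (Val.tuple c.1)[j]? = some vj ∧
      ((vj.fv = ∅ ∧ ∀ p, ¬ RecCallT f p c.2) ∨
       (∀ p, RecCallT f p c.2 → ∃ xs : List ℕ,
          p.tupleVars = some xs ∧ xs.length = A.tuple.length ∧
          ∃ x, xs[j]? = some x ∧ Val.SubV (.var x) vj ∧ Val.var x ≠ vj))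

/-! ## Typing of terms and isos -/

/-- An iso-variable context: at most one iso-variable `f : A ↔ B`. -/
abbrev IsoCtx := Option (ℕ × Ty × Ty)

/-- Typing of let-patterns, producing the context of bound variables. -/
inductive PatTy : Pat → Ty → Ctx → Prop
  | pvar (x : ℕ) (A : Ty) : PatTy (.pvar x) A (Ctx.single x A)
  | ppair {p q A B Γ Δ} :
      PatTy p A Γ → PatTy q B Δ → Ctx.disj Γ Δ →
      PatTy (.ppair p q) (.prod A B) (Γ.union Δ)

mutual
  /-- Typing of terms: `Δ; Ψ ⊢ t : A`. -/
  inductive TermTy : Ctx → IsoCtx → Term → Ty → Prop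
    | unit (Ψ : IsoCtx) : TermTy Ctx.empty Ψ .unit .one
    | var (x : ℕ) (A : Ty) (Ψ : IsoCtx) : TermTy (Ctx.single x A) Ψ (.var x) A
    | inl {Γ Ψ t A B} : TermTy Γ Ψ t A → TermTy Γ Ψ (.inl t) (.sum A B)
    | inr {Γ Ψ t A B} : TermTy Γ Ψ t B → TermTy Γ Ψ (.inr t) (.sum A B)
    | fold {Γ Ψ t A} : TermTy Γ Ψ t A.unfold → TermTy Γ Ψ (.fold t) (.mu A)
    | pair {Γ Δ Ψ t₁ t₂ A B} :
        TermTy Γ Ψ t₁ A → TermTy Δ Ψ t₂ B → Ctx.disj Γ Δ →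
        TermTy (Γ.union Δ) Ψ (.pair t₁ t₂) (.prod A B)
    | appV {Γ Ψ ω t A B} :
        IsoTy Ψ ω A B → TermTy Γ Ψ t A → TermTy Γ Ψ (.app ω t) B
    | appC {Γ Ψ ω t A B} :
        IsoTy none ω A B → TermTy Γ Ψ t A → TermTy Γ Ψ (.app ω t) B
    | lett {Γ Δ Ξ Ψ p t₁ t₂ A B} :
        TermTy Γ Ψ t₁ A → PatTy p A Ξ → TermTy (Δ.union Ξ) Ψ t₂ B →
        Ctx.disj Γ Δ → Ctx.disj Δ Ξ →
        TermTy (Γ.union Δ) Ψ (.lett p t₁ t₂) B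

  /-- Typing of isos: `Ψ ⊢ ω : A ↔ B`. -/
  inductive IsoTy : IsoCtx → Iso → Ty → Ty → Prop
    | ivar (f : ℕ) (A B : Ty) : IsoTy (some (f, A, B)) (.ivar f) A B
    | fixI {f ω A B} (Ψ : IsoCtx) :
        IsoTy (some (f, A, B)) ω A B →
        (∀ l, ω = .clauses l → StructRecClauses f l A) →
        IsoTy Ψ (.fixI f ω) A B
    | clauses {Ψ l A B} (Γof : Val × Term → Ctx) :
        (∀ c ∈ Clauses.toList l, VTy (Γof c) c.1 A) →
        (∀ c ∈ Clauses.toList l, TermTy (Γof c) Ψ c.2 B) →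
        OD A {v | ∃ e, (v, e) ∈ Clauses.toList l} →
        OD B {w | ∃ c ∈ Clauses.toList l, Term.valOf c.2 = some w} →
        IsoTy Ψ (.clauses l) A B
end

/-! ## Explicit substitutions -/

/-- The substitution determined by an association list. -/
def Sub.ofList (L : List (ℕ × Val)) : Sub :=
  fun x => (L.find? (fun p => p.1 = x)).map Prod.snd

/-- `let σ in t` : a nested sequence of lets, one per binding. -/
def letSig (L : List (ℕ × Val)) (t : Term) : Term :=
  L.foldr (fun xv acc => .lett (.pvar xv.1) xv.2.toTerm acc) t

/-- The explicit let-propagation rules `→ₑₗₑₜ`. -/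
inductive ELet : Term → Term → Prop
  | letvar {x : ℕ} {v : Val} : ELet (.lett (.pvar x) v.toTerm (.var x)) v.toTerm
  | letpair {x : ℕ} {p : Pat} {t₁ t₂ t : Term} :
      ELet (.lett (.ppair (.pvar x) p) (.pair t₁ t₂) t)
           (.lett (.pvar x) t₁ (.lett p t₂ t))
  | pairL {x : ℕ} {v : Val} {t₁ t₂ : Term} : x ∈ t₁.fvT →
      ELet (.lett (.pvar x) v.toTerm (.pair t₁ t₂))
           (.pair (.lett (.pvar x) v.toTerm t₁) t₂)
  | pairR {x : ℕ} {v : Val} {t₁ t₂ : Term} : x ∈ t₂.fvT →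
      ELet (.lett (.pvar x) v.toTerm (.pair t₁ t₂))
           (.pair t₁ (.lett (.pvar x) v.toTerm t₂))
  | inl {x : ℕ} {v : Val} {t : Term} :
      ELet (.lett (.pvar x) v.toTerm (.inl t)) (.inl (.lett (.pvar x) v.toTerm t))
  | inr {x : ℕ} {v : Val} {t : Term} :
      ELet (.lett (.pvar x) v.toTerm (.inr t)) (.inr (.lett (.pvar x) v.toTerm t))
  | fold {x : ℕ} {v : Val} {t : Term} :
      ELet (.lett (.pvar x) v.toTerm (.fold t)) (.fold (.lett (.pvar x) v.toTerm t))
  | app {x : ℕ} {v : Val} {ω : Iso} {t : Term} :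
      ELet (.lett (.pvar x) v.toTerm (.app ω t)) (.app ω (.lett (.pvar x) v.toTerm t))

/-- The explicit-substitution reduction `→_{eβ}`. -/
inductive EBeta : Term → Term → Prop
  | elet {t t'} : ELet t t' → EBeta t t'
  | inlC {t t'} : EBeta t t' → EBeta (.inl t) (.inl t')
  | inrC {t t'} : EBeta t t' → EBeta (.inr t) (.inr t')
  | foldC {t t'} : EBeta t t' → EBeta (.fold t) (.fold t')
  | pairL {t t'} (v : Val) : EBeta t t' → EBeta (.pair t v.toTerm) (.pair t' v.toTerm)
  | pairR {t t'} (v : Val) : EBeta t t' → EBeta (.pair v.toTerm t) (.pair v.toTerm t')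
  | appC {ω t t'} : EBeta t t' → EBeta (.app ω t) (.app ω t')
  | lettC {p t₁ t₁' t₂} : EBeta t₁ t₁' → EBeta (.lett p t₁ t₂) (.lett p t₁' t₂)
  | isoRec {f ω t} :
      EBeta (.app (.fixI f ω) t) (.app (Iso.isoSub f (.fixI f ω) ω) t)
  | lettE {L : List (ℕ × Val)} {p : Pat} {v : Val} {t : Term} :
      Matches (Sub.ofList L) p.toVal v → EBeta (.lett p v.toTerm t) (letSig L t)
  | isoApp {L : List (ℕ × Val)} {l : Clauses} {vi : Val} {e : Term} {v : Val} :
      (vi, e) ∈ l.toList → Matches (Sub.ofList L) vi v →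
      EBeta (.app (.clauses l) v.toTerm) (letSig L e)

end LinRev

namespace LinRev

/-- The support of a matching substitution is exactly the free variables of the pattern. -/
lemma matches_supp {σ : Sub} {p v : Val} (h : Matches σ p v) :
    ∀ x, σ x ≠ none ↔ x ∈ p.fv := by
  induction h with
  | unit => intro x; simp [Val.fv]
  | var y w => intro x; by_cases hx : x = y <;> simp [Val.fv, hx]
  | inl _ ih => simpa [Val.fv] using ih
  | inr _ ih => simpa [Val.fv] using ih
  | fold _ ih => simpa [Val.fv] using ih
  | @pair σ₁ σ₂ p₁ p₂ v₁ v₂ _ _ _ ih1 ih2 =>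
      intro x
      simp only [Val.fv, Finset.mem_union, ← ih1 x, ← ih2 x, Sub.union]
      cases h1 : σ₁ x <;> simp [Option.orElse]

/-- The domain of the typing context is exactly the free variables of the value. -/
lemma vty_supp {Γ : Ctx} {p : Val} {A : Ty} (h : VTy Γ p A) :
    ∀ x, Γ x ≠ none ↔ x ∈ p.fv := by
  induction h with
  | unit => intro x; simp [Val.fv, Ctx.empty]
  | var y B => intro x; by_cases hx : x = y <;> simp [Val.fv, Ctx.single, hx]
  | inl _ ih => simpa [Val.fv] using ih
  | inr _ ih => simpa [Val.fv] using ih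
  | fold _ ih => simpa [Val.fv] using ih
  | @pair Γ₁ Γ₂ v w B C _ _ _ ih1 ih2 =>
      intro x
      simp only [Val.fv, Finset.mem_union, ← ih1 x, ← ih2 x, Ctx.union]
      cases h1 : Γ₁ x <;> simp [Option.orElse]

lemma union_eq_empty {Γ Δ : Ctx} (h : Γ.union Δ = Ctx.empty) :
    Γ = Ctx.empty ∧ Δ = Ctx.empty := by
  constructor <;> funext x <;>
    · have := congrFun h x
      simp only [Ctx.empty, Ctx.union] at this ⊢
      cases h1 : Γ x <;> cases h2 : Δ x <;> simp_all [Option.orElse]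

lemma single_ne_empty (x : ℕ) (A : Ty) : Ctx.single x A ≠ Ctx.empty := by
  intro h
  have := congrFun h x
  simp [Ctx.empty, Ctx.single] at this

lemma vty_empty_one {Γ : Ctx} {v : Val} (h : VTy Γ v .one) (hΓ : Γ = Ctx.empty) :
    v = .unit := by
  cases h with
  | unit => rfl
  | var x A => exact absurd hΓ (single_ne_empty x _)

lemma vty_empty_sum {Γ : Ctx} {v : Val} {A B : Ty} (h : VTy Γ v (.sum A B))
    (hΓ : Γ = Ctx.empty) :
    (∃ w, v = .inl w ∧ VTy Ctx.empty w A) ∨ (∃ w, v = .inr w ∧ VTy Ctx.empty w B) := by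
  cases h with
  | var x C => exact absurd hΓ (single_ne_empty x _)
  | inl h => exact Or.inl ⟨_, rfl, hΓ ▸ h⟩
  | inr h => exact Or.inr ⟨_, rfl, hΓ ▸ h⟩

lemma vty_empty_mu {Γ : Ctx} {v : Val} {A : Ty} (h : VTy Γ v (.mu A))
    (hΓ : Γ = Ctx.empty) :
    ∃ w, v = .fold w ∧ VTy Ctx.empty w A.unfold := by
  cases h with
  | var x C => exact absurd hΓ (single_ne_empty x _)
  | fold h => exact ⟨_, rfl, hΓ ▸ h⟩

lemma vty_empty_prod {Γ : Ctx} {v : Val} {A B : Ty} (h : VTy Γ v (.prod A B))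
    (hΓ : Γ = Ctx.empty) :
    ∃ w₁ w₂, v = .pair w₁ w₂ ∧ VTy Ctx.empty w₁ A ∧ VTy Ctx.empty w₂ B := by
  cases h with
  | var x C => exact absurd hΓ (single_ne_empty x _)
  | @pair Γ₁ Γ₂ w₁ w₂ _ _ h1 h2 hd =>
      obtain ⟨e1, e2⟩ := union_eq_empty hΓ
      exact ⟨w₁, w₂, rfl, e1 ▸ h1, e2 ▸ h2⟩

theorem od_aux : ∀ {A : Ty} {S : Set Val}, OD A S →
    (∀ p ∈ S, ∃ Γ : Ctx, VTy Γ p A) →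
    ∀ v : Val, VTy Ctx.empty v A →
    ∃! pσ : Val × Sub, pσ.1 ∈ S ∧ Matches pσ.2 pσ.1 v := by
  intro A S hOD
  induction hOD with
  | var B x =>
      intro _ v hv
      refine ⟨(Val.var x, fun y => if y = x then some v else none),
        ⟨rfl, Matches.var x v⟩, ?_⟩
      rintro ⟨p, σ⟩ ⟨hp, hm⟩
      simp only [Set.mem_singleton_iff] at hp
      subst hp
      cases hm
      rfl
  | unit =>
      intro _ v hv
      obtain rfl := vty_empty_one hv rfl
      refine ⟨(Val.unit, fun _ => none), ⟨rfl, Matches.unit⟩, ?_⟩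
      rintro ⟨p, σ⟩ ⟨hp, hm⟩
      simp only [Set.mem_singleton_iff] at hp
      subst hp
      cases hm
      rfl
  | @sum A B S T hS hT ihS ihT =>
      intro hWT v hv
      have hWTS : ∀ p ∈ S, ∃ Γ : Ctx, VTy Γ p A := by
        intro p hp
        obtain ⟨Γ, hΓ⟩ := hWT (.inl p) (Or.inl ⟨p, hp, rfl⟩)
        cases hΓ with
        | inl h => exact ⟨_, h⟩
      have hWTT : ∀ p ∈ T, ∃ Γ : Ctx, VTy Γ p B := by
        intro p hp
        obtain ⟨Γ, hΓ⟩ := hWT (.inr p) (Or.inr ⟨p, hp, rfl⟩)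
        cases hΓ with
        | inr h => exact ⟨_, h⟩
      rcases vty_empty_sum hv rfl with ⟨w, rfl, hw⟩ | ⟨w, rfl, hw⟩
      · obtain ⟨⟨p, σ⟩, ⟨hpS, hm⟩, huniq⟩ := ihS hWTS w hw
        refine ⟨(.inl p, σ), ⟨Or.inl ⟨p, hpS, rfl⟩, Matches.inl hm⟩, ?_⟩
        rintro ⟨q, τ⟩ ⟨hq, hmq⟩
        rcases hq with ⟨q', hq', rfl⟩ | ⟨q', hq', rfl⟩
        · cases hmq with
          | inl hmq' =>
              have := huniq (q', τ) ⟨hq', hmq'⟩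
              simp only [Prod.mk.injEq] at this ⊢
              exact ⟨congrArg Val.inl this.1, this.2⟩
        · cases hmq
      · obtain ⟨⟨p, σ⟩, ⟨hpT, hm⟩, huniq⟩ := ihT hWTT w hw
        refine ⟨(.inr p, σ), ⟨Or.inr ⟨p, hpT, rfl⟩, Matches.inr hm⟩, ?_⟩
        rintro ⟨q, τ⟩ ⟨hq, hmq⟩
        rcases hq with ⟨q', hq', rfl⟩ | ⟨q', hq', rfl⟩
        · cases hmq
        · cases hmq with
          | inr hmq' =>
              have := huniq (q', τ) ⟨hq', hmq'⟩
              simp only [Prod.mk.injEq] at this ⊢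
              exact ⟨congrArg Val.inr this.1, this.2⟩
  | @mu A S hS ih =>
      intro hWT v hv
      have hWTS : ∀ p ∈ S, ∃ Γ : Ctx, VTy Γ p A.unfold := by
        intro p hp
        obtain ⟨Γ, hΓ⟩ := hWT (.fold p) ⟨p, hp, rfl⟩
        cases hΓ with
        | fold h => exact ⟨_, h⟩
      obtain ⟨w, rfl, hw⟩ := vty_empty_mu hv rfl
      obtain ⟨⟨p, σ⟩, ⟨hpS, hm⟩, huniq⟩ := ih hWTS w hw
      refine ⟨(.fold p, σ), ⟨⟨p, hpS, rfl⟩, Matches.fold hm⟩, ?_⟩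
      rintro ⟨q, τ⟩ ⟨hq, hmq⟩
      rcases hq with ⟨q', hq', rfl⟩
      cases hmq with
      | fold hmq' =>
          have := huniq (q', τ) ⟨hq', hmq'⟩
          simp only [Prod.mk.injEq] at this ⊢
          exact ⟨congrArg Val.fold this.1, this.2⟩
  | @prodL A B S hpair hS1 hS2 ih1 ih2 =>
      intro hWT v hv
      have hWT1 : ∀ p ∈ proj1 S, ∃ Γ : Ctx, VTy Γ p A := by
        rintro p ⟨w, hw⟩
        obtain ⟨Γ, hΓ⟩ := hWT _ hw
        cases hΓ with
        | pair h1 h2 hd => exact ⟨_, h1⟩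
      obtain ⟨w₁, w₂, rfl, hw1, hw2⟩ := vty_empty_prod hv rfl
      obtain ⟨⟨p₁, σ₁⟩, ⟨hp1, hm1⟩, huniq1⟩ := ih1 hWT1 w₁ hw1
      have hWT2 : ∀ p ∈ sect1 S p₁, ∃ Γ : Ctx, VTy Γ p B := by
        intro p hp
        obtain ⟨Γ, hΓ⟩ := hWT _ hp
        cases hΓ with
        | pair h1 h2 hd => exact ⟨_, h2⟩
      obtain ⟨⟨p₂, σ₂⟩, ⟨hp2, hm2⟩, huniq2⟩ := ih2 p₁ hp1 hWT2 w₂ hw2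
      have hdisj : Sub.disj σ₁ σ₂ := by
        intro x
        by_contra hc
        push_neg at hc
        obtain ⟨Γ, hΓ⟩ := hWT _ hp2
        cases hΓ with
        | @pair Γ₁ Γ₂ _ _ _ _ h1 h2 hd =>
            have hx1 : x ∈ Val.fv p₁ := (matches_supp hm1 x).mp hc.1
            have hx2 : x ∈ Val.fv p₂ := (matches_supp hm2 x).mp hc.2
            rcases hd x with h | h
            · exact (vty_supp h1 x).mpr hx1 h
            · exact (vty_supp h2 x).mpr hx2 h
      refine ⟨(.pair p₁ p₂, σ₁.union σ₂), ⟨hp2, Matches.pair hm1 hm2 hdisj⟩, ?_⟩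
      rintro ⟨q, τ⟩ ⟨hq, hmq⟩
      obtain ⟨q₁, q₂, rfl⟩ := hpair q hq
      cases hmq with
      | @pair τ₁ τ₂ _ _ _ _ hmq1 hmq2 hdq =>
          have e1 := huniq1 (q₁, τ₁) ⟨⟨q₂, hq⟩, hmq1⟩
          simp only [Prod.mk.injEq] at e1
          obtain ⟨rfl, rfl⟩ := e1
          have e2 := huniq2 (q₂, τ₂) ⟨hq, hmq2⟩
          simp only [Prod.mk.injEq] at e2
          obtain ⟨rfl, rfl⟩ := e2
          rfl
  | @prodR A B S hpair hS1 hS2 ih1 ih2 =>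
      intro hWT v hv
      have hWT1 : ∀ p ∈ proj2 S, ∃ Γ : Ctx, VTy Γ p B := by
        rintro p ⟨w, hw⟩
        obtain ⟨Γ, hΓ⟩ := hWT _ hw
        cases hΓ with
        | pair h1 h2 hd => exact ⟨_, h2⟩
      obtain ⟨w₁, w₂, rfl, hw1, hw2⟩ := vty_empty_prod hv rfl
      obtain ⟨⟨p₂, σ₂⟩, ⟨hp2, hm2⟩, huniq1⟩ := ih1 hWT1 w₂ hw2
      have hWT2 : ∀ p ∈ sect2 S p₂, ∃ Γ : Ctx, VTy Γ p A := by
        intro p hp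
        obtain ⟨Γ, hΓ⟩ := hWT _ hp
        cases hΓ with
        | pair h1 h2 hd => exact ⟨_, h1⟩
      obtain ⟨⟨p₁, σ₁⟩, ⟨hp1, hm1⟩, huniq2⟩ := ih2 p₂ hp2 hWT2 w₁ hw1
      have hdisj : Sub.disj σ₁ σ₂ := by
        intro x
        by_contra hc
        push_neg at hc
        obtain ⟨Γ, hΓ⟩ := hWT _ hp1
        cases hΓ with
        | @pair Γ₁ Γ₂ _ _ _ _ h1 h2 hd =>
            have hx1 : x ∈ Val.fv p₁ := (matches_supp hm1 x).mp hc.1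
            have hx2 : x ∈ Val.fv p₂ := (matches_supp hm2 x).mp hc.2
            rcases hd x with h | h
            · exact (vty_supp h1 x).mpr hx1 h
            · exact (vty_supp h2 x).mpr hx2 h
      refine ⟨(.pair p₁ p₂, σ₁.union σ₂), ⟨hp1, Matches.pair hm1 hm2 hdisj⟩, ?_⟩
      rintro ⟨q, τ⟩ ⟨hq, hmq⟩
      obtain ⟨q₁, q₂, rfl⟩ := hpair q hq
      cases hmq with
      | @pair τ₁ τ₂ _ _ _ _ hmq1 hmq2 hdq =>
          have e1 := huniq1 (q₂, τ₂) ⟨⟨q₁, hq⟩, hmq2⟩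
          simp only [Prod.mk.injEq] at e1
          obtain ⟨rfl, rfl⟩ := e1
          have e2 := huniq2 (q₁, τ₁) ⟨hq, hmq1⟩
          simp only [Prod.mk.injEq] at e2
          obtain ⟨rfl, rfl⟩ := e2
          rfl

end LinRev

open LinRev in
/-- If `OD_A(S)` holds for a set `S` of well-typed open values of
type `A`, then for every closed value `v` of type `A` there is a unique `v' ∈ S`
and a unique substitution `σ` with `σ[v'] = v` (exhaustivity and non-overlap). -/
theorem od_exhaustive_nonoverlapping (A : Ty) (S : Set Val)
    (hOD : OD A S) (hWT : ∀ p ∈ S, ∃ Γ : Ctx, VTy Γ p A)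
    (v : Val) (hv : VTy Ctx.empty v A) :
    ∃! pσ : Val × Sub, pσ.1 ∈ S ∧ Matches pσ.2 pσ.1 v :=
  od_aux hOD hWT v hv
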